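/- The minimum number of edges of a hamiltonian threshold graph of order n is (n² + 2n − 3)/4 if n is odd and (n² + 2n − 4)/4 if n is even, and this minimum is attained uniquely (up to isomorphism) by G_n. -/

import Mathlib

open SimpleGraph Finset

/-- A threshold graph: there exist a nonnegative vertex weight function and a
nonnegative threshold `t` such that distinct vertices are adjacent iff the sum
of their weights exceeds `t`. -/
def SimpleGraph.IsThreshold {V : Type} (G : SimpleGraph V) : Prop :=
  ∃ (f : V → ℝ) (t : ℝ), (∀ v, 0 ≤ f v) ∧ 0 ≤ t ∧
    ∀ u v : V, u ≠ v → (G.Adj u v ↔ f u + f v > t)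

/-- Degree of a vertex (no decidability assumptions). -/
noncomputable def SimpleGraph.deg {V : Type} [Fintype V] [DecidableEq V] (G : SimpleGraph V) (v : V) : ℕ :=
  Nat.card {u // G.Adj v u}

/-- `δ 0 = 0 < δ 1 < ⋯ < δ m` are exactly the degrees occurring in `G`;
the degree partition of `G` is `D_i = {v : deg v = δ i}`, `i = 0, …, m`. -/
structure SimpleGraph.DegreePartition {V : Type} [Fintype V] [DecidableEq V] (G : SimpleGraph V)
    (m : ℕ) (δ : ℕ → ℕ) : Prop where
  zero : δ 0 = 0
  mono : ∀ i j, i < j → j ≤ m → δ i < δ j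
  cover : ∀ v : V, ∃ i ≤ m, G.deg v = δ i
  attained : ∀ i, 1 ≤ i → i ≤ m → ∃ v : V, G.deg v = δ i

/-- The degree set `D_i` of the degree partition. -/
noncomputable def SimpleGraph.Dset {V : Type} [Fintype V] [DecidableEq V] (G : SimpleGraph V)
    (δ : ℕ → ℕ) (i : ℕ) : Finset V :=
  Finset.univ.filter (fun v => G.deg v = δ i)

/-- A key edge of a threshold graph with degree partition `D_0, …, D_m`: an edge
joining `D_k` and `D_{m+1-k}` for some `1 ≤ k ≤ ⌈m/2⌉`. -/
def SimpleGraph.IsKeyEdge {V : Type} [Fintype V] [DecidableEq V] (G : SimpleGraph V)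
    (m : ℕ) (δ : ℕ → ℕ) (e : Sym2 V) : Prop :=
  e ∈ G.edgeSet ∧ ∃ x y k, e = s(x, y) ∧ 1 ≤ k ∧ k ≤ (m + 1) / 2 ∧
    G.deg x = δ k ∧ G.deg y = δ (m + 1 - k)

/-- The number of Hamilton cycles of `G`, counted as unordered spanning cycles
(a cycle is identified with its edge set). -/
noncomputable def SimpleGraph.hamCycleCount {V : Type} [Fintype V] [DecidableEq V]
    (G : SimpleGraph V) : ℕ :=
  Nat.card {s : Finset (Sym2 V) // ∃ (v : V) (w : G.Walk v v),
    w.IsHamiltonianCycle ∧ w.edges.toFinset = s}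

/-- The multiset of degrees of `G`. -/
noncomputable def SimpleGraph.degMultiset {V : Type} [Fintype V] [DecidableEq V] (G : SimpleGraph V) :
    Multiset ℕ :=
  Finset.univ.val.map G.deg

/-- The degree sequence `n-1, n-1, n-2, …, ⌈n/2⌉, ⌈n/2⌉, …, 3, 2` of the graph `Gₙ`,
as a multiset: the values `2, …, n-1` together with an extra copy of `⌈n/2⌉` and of `n-1`. -/
def gnDegSeq (n : ℕ) : Multiset ℕ :=
  (Multiset.range (n - 2)).map (· + 2) + {(n + 1) / 2, n - 1}

/-- An independent set in a graph. -/
def SimpleGraph.IsIndepSet₀ {V : Type} (G : SimpleGraph V) (S : Set V) : Prop :=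
  ∀ u ∈ S, ∀ v ∈ S, u ≠ v → ¬ G.Adj u v

/-!
Order the vertices `v₀, …, v_{n-1}` of a threshold graph by increasing weight; then every
neighbourhood is an up-set of this order (apart from the vertex itself). Suppose `2p + 2 < n`
and `deg v_p ≤ p + 1`. A neighbour of `v_p` among `v₀, …, v_p` would make `v_p` adjacent to
at least `n - p - 1 > p + 1` vertices, so every neighbour of `I = {v₀, …, v_p}` is a neighbour
of `v_p`. Along a Hamilton cycle the predecessors of the vertices of `I` are `|I|` distinct
vertices of `N(v_p)`, hence all of `N(v_p)`, so the cycle never leaves `I ∪ N(v_p)`, which has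
fewer than `n` vertices. Hence `deg v_p ≥ p + 2`, and with nestedness this forces `v_i v_j` to
be an edge whenever `i + j ≥ n - 2`. So `deg v_j` is at least the degree of the `j`-th vertex
of `Gₙ`; summing gives the bound, and equality forces the degree sequence of `Gₙ`.
-/
/-- The degree of the `j`-th vertex of `Gₙ`, counting from `0` by increasing weight. -/
def gnDeg (n j : ℕ) : ℕ := if 2 * j + 2 < n then j + 2 else min (j + 1) (n - 1)

theorem Multiset.map_range_ite_add_singleton {h m : ℕ} (hm : h ≤ m) :
    (Multiset.range m).map (fun j => if j < h then j + 2 else j + 1) + {m + 1} =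
      (Multiset.range m).map (· + 2) + {h + 1} := by
  induction m, hm using Nat.le_induction with
  | base => rw [Multiset.map_congr rfl fun j hj => if_pos (Multiset.mem_range.mp hj)]
  | succ m hm ih =>
    rw [Multiset.range_succ, Multiset.map_cons, Multiset.map_cons, if_neg (by omega),
      Multiset.cons_add, Multiset.cons_add, ← ih, Multiset.add_comm, Multiset.singleton_add,
      Multiset.add_comm, Multiset.singleton_add]
    exact Multiset.cons_swap _ _ _

theorem map_range_gnDeg {n : ℕ} (hn : 3 ≤ n) :
    (Multiset.range n).map (gnDeg n) = gnDegSeq n := by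
  obtain ⟨m, rfl⟩ : ∃ m, n = m + 2 := ⟨n - 2, by omega⟩
  have hlow : (Multiset.range m).map (gnDeg (m + 2)) =
      (Multiset.range m).map (fun j => if j < (m + 1) / 2 then j + 2 else j + 1) :=
    Multiset.map_congr rfl fun j hj => by
      have := Multiset.mem_range.mp hj
      unfold gnDeg; split_ifs <;> omega
  have key := Multiset.map_range_ite_add_singleton (show (m + 1) / 2 ≤ m by omega)
  have htop : gnDeg (m + 2) (m + 1) = m + 1 ∧ gnDeg (m + 2) m = m + 1 := by
    unfold gnDeg; constructor <;> split_ifs <;> omega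
  rw [Multiset.range_succ, Multiset.range_succ, Multiset.map_cons, Multiset.map_cons, hlow,
    htop.1, htop.2, gnDegSeq, show m + 2 - 2 = m by omega, show m + 2 - 1 = m + 1 by omega,
    show (m + 2 + 1) / 2 = (m + 1) / 2 + 1 by omega, Multiset.insert_eq_cons]
  simp only [← Multiset.singleton_add]
  rw [← add_assoc _ {(m + 1) / 2 + 1}, ← key]
  abel

theorem two_mul_sum_gnDegSeq {n : ℕ} (hn : 3 ≤ n) :
    2 * (gnDegSeq n).sum = n ^ 2 + 2 * n - 4 + n % 2 := by
  obtain ⟨m, rfl⟩ : ∃ m, n = m + 2 := ⟨n - 2, by omega⟩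
  have hgauss := Finset.sum_range_id_mul_two m
  have hsum : ((Multiset.range m).map (· + 2)).sum = ∑ j ∈ range m, j + 2 * m := by
    change ∑ j ∈ range m, (j + 2) = _
    rw [Finset.sum_add_distrib, sum_const, card_range, smul_eq_mul, mul_comm]
  simp only [gnDegSeq, Multiset.sum_add, hsum, Multiset.insert_eq_cons, Multiset.sum_cons,
    Multiset.sum_singleton, Nat.add_sub_cancel]
  rcases m with _ | k
  · omega
  · simp only [Nat.add_sub_cancel] at hgauss
    ring_nf at hgauss ⊢
    omega

theorem Fintype.exists_equiv_fin_monotone {α β : Type*} [Fintype α] [LinearOrder β] {n : ℕ}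
    (hcard : Fintype.card α = n) (f : α → β) : ∃ e : Fin n ≃ α, Monotone (f ∘ e) := by
  let g := (Fintype.equivFinOfCardEq hcard).symm
  exact ⟨(Tuple.sort (f ∘ g)).trans g, Tuple.monotone_sort (f ∘ g)⟩

theorem Fin.univ_val_map_comp_val {α : Type*} (n : ℕ) (g : ℕ → α) :
    (univ : Finset (Fin n)).val.map (g ∘ Fin.val) = (Multiset.range n).map g := by
  rw [← Multiset.map_map, Fin.univ_val_map, List.ofFn_eq_map, List.map_coe_finRange_eq_range]
  rfl

theorem Finset.univ_val_map_eq_of_le_of_sum_eq {ι : Type*} [Fintype ι] {b d : ι → ℕ}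
    (hle : ∀ i, b i ≤ d i) (hsum : ∑ i, d i = ∑ i, b i) : univ.val.map d = univ.val.map b :=
  Multiset.map_congr rfl fun i _ =>
    ((sum_eq_sum_iff_of_le fun i _ => hle i).mp hsum.symm i (mem_univ i)).symm

namespace SimpleGraph

section Hamiltonian

variable {V : Type*} [Fintype V] [DecidableEq V] {G : SimpleGraph V}

theorem IsHamiltonian.exists_perm_adj_orbit [Nontrivial V] (hG : G.IsHamiltonian) :
    ∃ σ : Equiv.Perm V, (∀ v, G.Adj v (σ v)) ∧ ∀ v w, ∃ k : ℕ, (σ ^ k) v = w := by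
  obtain ⟨p, hp⟩ := hG.exists_isHamiltonianCycle (Classical.arbitrary V)
  set n := Fintype.card V
  have hlen : p.length = n := hp.length_eq
  have hn : 3 ≤ n := hlen ▸ hp.isCycle.three_le_length
  have : NeZero n := ⟨by omega⟩
  have hc_inj : Function.Injective fun k : ZMod n => p.getVert k.val := fun k l hkl =>
    ZMod.val_injective n <| hp.isCycle.getVert_injOn'
      (by simp only [Set.mem_ofPred_eq]; have := ZMod.val_lt k; omega)
      (by simp only [Set.mem_ofPred_eq]; have := ZMod.val_lt l; omega) hkl
  -- label the cycle by `ZMod n`; the successor map is then translation by `1`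
  let c : ZMod n ≃ V := Equiv.ofBijective _
    ((Fintype.bijective_iff_injective_and_card _).mpr ⟨hc_inj, ZMod.card n⟩)
  have hc_succ (k : ZMod n) : c (k + 1) = p.getVert (k.val + 1) := by
    have hk := ZMod.val_lt k
    change p.getVert _ = _
    rw [ZMod.val_add, ZMod.val_one_eq_one_mod, Nat.mod_eq_of_lt (by omega : 1 < n)]
    rcases (by omega : k.val + 1 < n ∨ k.val + 1 = n) with h | h
    · rw [Nat.mod_eq_of_lt h]
    · rw [h, Nat.mod_self, Walk.getVert_zero, ← hlen, Walk.getVert_length]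
  have hpow (k : ℕ) (v : V) : (c.permCongr (Equiv.addRight 1) ^ k) v = c (c.symm v + k) := by
    induction k with
    | zero => simp
    | succ k ih => simp [pow_succ', ih, add_assoc]
  refine ⟨c.permCongr (Equiv.addRight 1), fun v => ?_,
    fun v w => ⟨(c.symm w - c.symm v).val, ?_⟩⟩
  · have := p.adj_getVert_succ (i := (c.symm v).val) (by have := ZMod.val_lt (c.symm v); omega)
    rw [← hc_succ, show p.getVert (c.symm v).val = v from c.apply_symm_apply v] at this
    simpa using this
  · rw [hpow, ZMod.natCast_zmod_val, add_sub_cancel, Equiv.apply_symm_apply]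

theorem IsHamiltonian.card_le_card_add_card (hG : G.IsHamiltonian) {I S : Finset V}
    (hI : I.Nonempty) (hIS : ∀ u ∈ I, ∀ v, G.Adj u v → v ∈ S) (hSI : #S ≤ #I) :
    Fintype.card V ≤ #I + #S := by
  cases subsingleton_or_nontrivial V with
  | inl _ =>
    exact Fintype.card_le_one_iff_subsingleton.mpr ‹_›
      |>.trans (hI.card_pos.trans_le le_self_add)
  | inr _ =>
  obtain ⟨σ, hadj, horbit⟩ := hG.exists_perm_adj_orbit
  have hpred : I.map σ.symm.toEmbedding = S := by
    refine eq_of_subset_of_card_le (fun v hv => ?_) (by rwa [card_map])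
    obtain ⟨u, hu, rfl⟩ := mem_map.mp hv
    exact hIS u hu _ (by simpa using (hadj (σ.symm u)).symm)
  have hclosed : ∀ v ∈ I ∪ S, σ v ∈ I ∪ S := by
    intro v hv
    rcases mem_union.mp hv with hv | hv
    · exact mem_union_right _ (hIS v hv _ (hadj v))
    · obtain ⟨u, hu, rfl⟩ := mem_map.mp (hpred ▸ hv)
      simpa using mem_union_left S hu
  obtain ⟨v, hv⟩ := hI
  have huniv : ∀ w, w ∈ I ∪ S := fun w => by
    obtain ⟨k, rfl⟩ := horbit v w
    induction k with
    | zero => exact mem_union_left _ hv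
    | succ k ih => rw [pow_succ', Equiv.Perm.mul_apply]; exact hclosed _ ih
  calc Fintype.card V = #(univ : Finset V) := card_univ.symm
    _ ≤ #(I ∪ S) := card_le_card fun w _ => huniv w
    _ ≤ #I + #S := card_union_le I S

end Hamiltonian

section NestedOrder

variable {V : Type*} [Fintype V] {G : SimpleGraph V} {n : ℕ} {e : Fin n ≃ V}

def IsNestedOrder (G : SimpleGraph V) (e : Fin n ≃ V) : Prop :=
  ∀ i j k, G.Adj (e i) (e j) → j ≤ k → k ≠ i → G.Adj (e i) (e k)

variable [DecidableRel G.Adj]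

theorem degree_equiv_eq_card_filter (j : Fin n) :
    G.degree (e j) = #{i | G.Adj (e j) (e i)} := by
  rw [← card_neighborFinset_eq_degree, ← card_map e.toEmbedding]
  congr 1
  ext v
  simp

namespace IsNestedOrder

theorem card_sub_le_degree (hG : G.IsNestedOrder e) {p a : Fin n} (hpa : G.Adj (e p) (e a)) :
    n - 1 - a ≤ G.degree (e p) := by
  have hsub : (Ici a).erase p ⊆ ({i | G.Adj (e p) (e i)} : Finset (Fin n)) := fun k hk => by
    rw [mem_erase, mem_Ici] at hk
    simpa using hG p a k hpa hk.2 hk.1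
  have := (pred_card_le_card_erase (s := Ici a) (a := p)).trans (card_le_card hsub)
  rw [Fin.card_Ici, ← degree_equiv_eq_card_filter] at this
  omega

theorem degree_le_of_not_adj (hG : G.IsNestedOrder e) {p j : Fin n} (hpj : p ≠ j)
    (hnadj : ¬ G.Adj (e p) (e j)) : G.degree (e p) ≤ n - 1 - j := by
  have hsub : ({i | G.Adj (e p) (e i)} : Finset (Fin n)) ⊆ Ioi j := fun k hk => by
    rw [mem_filter] at hk
    exact mem_Ioi.mpr (lt_of_not_ge fun hkj => hnadj (hG p k j hk.2 hkj hpj.symm))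
  rw [degree_equiv_eq_card_filter, ← Fin.card_Ioi]
  exact card_le_card hsub

variable [DecidableEq V]

theorem add_two_le_degree (hG : G.IsNestedOrder e) (hham : G.IsHamiltonian) {p : Fin n}
    (hp : 2 * p + 2 < n) : p + 2 ≤ G.degree (e p) := by
  by_contra! hdeg
  have hlow : ∀ a ≤ p, ¬ G.Adj (e p) (e a) := fun a ha hpa => by
    have := hG.card_sub_le_degree hpa
    omega
  have hIS : ∀ u ∈ (Iic p).map e.toEmbedding, ∀ v, G.Adj u v →
      v ∈ G.neighborFinset (e p) := by
    intro u hu v huv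
    obtain ⟨a, ha, rfl⟩ := mem_map.mp hu
    obtain ⟨k, rfl⟩ := e.surjective v
    have hkp : k ≠ p := by
      rintro rfl
      exact hlow a (mem_Iic.mp ha) huv.symm
    exact (mem_neighborFinset _ _ _).mpr (hG k a p huv.symm (mem_Iic.mp ha) hkp.symm).symm
  have := hham.card_le_card_add_card ⟨e p, mem_map_of_mem _ (mem_Iic.mpr le_rfl)⟩ hIS
    (by rw [card_map, Fin.card_Iic, card_neighborFinset_eq_degree]; omega)
  rw [card_map, Fin.card_Iic, card_neighborFinset_eq_degree, ← Fintype.card_congr e,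
    Fintype.card_fin] at this
  omega

theorem adj_of_lt_of_le_add (hG : G.IsNestedOrder e) (hham : G.IsHamiltonian) (hn : 3 ≤ n)
    {i j : Fin n} (hij : i < j) (hsum : n ≤ i + j + 2) : G.Adj (e i) (e j) := by
  have hij' : (i : ℕ) < j := hij
  let p : Fin n := ⟨n - 2 - j, by omega⟩
  have hp : (p : ℕ) = n - 2 - j := rfl
  -- `e p` has at least `p + 2` neighbours, too many to all lie above `e j`
  have hpj : G.Adj (e p) (e j) := by
    by_contra hnadj
    have := hG.add_two_le_degree hham (p := p) (by omega)
    have := hG.degree_le_of_not_adj (Fin.ne_of_lt (show p < j by rw [Fin.lt_def]; omega)) hnadj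
    omega
  exact (hG j p i hpj.symm (by rw [Fin.le_def]; omega) hij.ne).symm

theorem gnDeg_le_degree (hG : G.IsNestedOrder e) (hham : G.IsHamiltonian) (hn : 3 ≤ n)
    (j : Fin n) : gnDeg n j ≤ G.degree (e j) := by
  unfold gnDeg
  split_ifs with hj
  · exact hG.add_two_le_degree hham hj
  · let p : Fin n := ⟨n - 2 - j, by omega⟩
    have hp : (p : ℕ) = n - 2 - j := rfl
    have hsub : (Ici p).erase j ⊆ ({i | G.Adj (e j) (e i)} : Finset (Fin n)) := fun i hi => by
      rw [mem_erase, mem_Ici, Fin.le_def] at hi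
      rw [mem_filter]
      refine ⟨mem_univ _, ?_⟩
      rcases lt_or_gt_of_ne hi.1 with h | h
      · exact (hG.adj_of_lt_of_le_add hham hn h (by omega)).symm
      · exact hG.adj_of_lt_of_le_add hham hn h (by omega)
    have := (pred_card_le_card_erase (s := Ici p) (a := j)).trans (card_le_card hsub)
    rw [Fin.card_Ici, ← degree_equiv_eq_card_filter] at this
    omega

end IsNestedOrder

end NestedOrder

theorem IsThreshold.exists_isNestedOrder {V : Type} [Fintype V] {G : SimpleGraph V} {n : ℕ}
    (hG : G.IsThreshold) (hcard : Fintype.card V = n) : ∃ e : Fin n ≃ V, G.IsNestedOrder e := by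
  obtain ⟨f, t, -, -, hft⟩ := hG
  obtain ⟨e, he⟩ := Fintype.exists_equiv_fin_monotone hcard f
  refine ⟨e, fun i j k hij hjk hki => ?_⟩
  have hf : f (e j) ≤ f (e k) := he hjk
  rw [hft _ _ (G.ne_of_adj hij)] at hij
  rw [hft _ _ (e.injective.ne hki.symm)]
  linarith

theorem deg_eq_degree {V : Type} [Fintype V] [DecidableEq V] (G : SimpleGraph V)
    [DecidableRel G.Adj] (v : V) : G.deg v = G.degree v := by
  rw [deg, ← card_neighborSet_eq_degree, Nat.card_eq_fintype_card]
  rfl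

theorem sum_degMultiset {V : Type} [Fintype V] [DecidableEq V] (G : SimpleGraph V) :
    G.degMultiset.sum = 2 * Nat.card G.edgeSet := by
  classical
  change ∑ v, G.deg v = _
  simp only [deg_eq_degree, sum_degrees_eq_twice_card_edges, edgeFinset_card,
    Nat.card_eq_fintype_card]

theorem IsThreshold.exists_degMultiset_eq_map_gnDeg_le {V : Type} [Fintype V] [DecidableEq V]
    {G : SimpleGraph V} {n : ℕ} (hG : G.IsThreshold) (hn : 3 ≤ n) (hcard : Fintype.card V = n)
    (hham : G.IsHamiltonian) :
    ∃ d : Fin n → ℕ, G.degMultiset = univ.val.map d ∧ ∀ j : Fin n, gnDeg n j ≤ d j := by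
  classical
  obtain ⟨e, he⟩ := hG.exists_isNestedOrder hcard
  refine ⟨fun j => G.degree (e j), ?_, he.gnDeg_le_degree hham hn⟩
  rw [degMultiset, ← Multiset.map_univ_val_equiv e, Multiset.map_map]
  exact Multiset.map_congr rfl fun j _ => deg_eq_degree G (e j)

end SimpleGraph

/-- the minimum size of a hamiltonian threshold graph of order `n` is
`(n² + 2n - 3)/4` for odd `n` and `(n² + 2n - 4)/4` for even `n`, attained uniquely by `Gₙ`
(uniqueness expressed via the degree sequence, which determines a threshold graph). -/
theorem stmt17 {V : Type} [Fintype V] [DecidableEq V] (n : ℕ) (hn : 3 ≤ n) (G : SimpleGraph V)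
    (hG : G.IsThreshold) (hcard : Fintype.card V = n) (hham : G.IsHamiltonian) :
    (Odd n → n ^ 2 + 2 * n - 3 ≤ 4 * Nat.card G.edgeSet ∧
      (4 * Nat.card G.edgeSet = n ^ 2 + 2 * n - 3 ↔ G.degMultiset = gnDegSeq n)) ∧
    (Even n → n ^ 2 + 2 * n - 4 ≤ 4 * Nat.card G.edgeSet ∧
      (4 * Nat.card G.edgeSet = n ^ 2 + 2 * n - 4 ↔ G.degMultiset = gnDegSeq n)) := by
  obtain ⟨d, hd, hgn_le⟩ := hG.exists_degMultiset_eq_map_gnDeg_le hn hcard hham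
  have hgn : gnDegSeq n = (univ : Finset (Fin n)).val.map (gnDeg n ∘ Fin.val) := by
    rw [Fin.univ_val_map_comp_val, map_range_gnDeg hn]
  have hle : (gnDegSeq n).sum ≤ G.degMultiset.sum := by
    rw [hgn, hd]
    exact sum_le_sum fun j _ => hgn_le j
  have hiff : G.degMultiset.sum = (gnDegSeq n).sum ↔ G.degMultiset = gnDegSeq n := by
    refine ⟨fun h => ?_, congrArg _⟩
    rw [hd, hgn] at h ⊢
    exact univ_val_map_eq_of_le_of_sum_eq hgn_le h
  have hE := G.sum_degMultiset
  have key : ∀ m, m = 2 * (gnDegSeq n).sum → m ≤ 4 * Nat.card G.edgeSet ∧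
      (4 * Nat.card G.edgeSet = m ↔ G.degMultiset = gnDegSeq n) := by
    rintro m rfl
    rw [← hiff]
    omega
  have hS := two_mul_sum_gnDegSeq hn
  exact ⟨fun hodd => key _ (by have := Nat.odd_iff.mp hodd; omega),
    fun heven => key _ (by have := Nat.even_iff.mp heven; omega)⟩
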